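/- arXiv:2005.12432 — 7 statements merged into one kernel-verified Lean document; each statement's English description precedes it below -/
import Mathlib

section
/- Let N be a positive integer, and let A, B, I be the matrices defined as usual. Then for every real x ≠ 0, det((I+A) − (1/(4x²))(I−B)) = 0 if and only if U_{N+1}(x) · U'_{N+1}(x) = 0. In other words, the characteristic numbers of the matrix pencil I+A − λ(I−B) of the form λ = 1/(4x²) correspond exactly to the nonzero real roots x of U_{N+1}(x)·U'_{N+1}(x). -/
open Polynomial Chebyshev

/-- Evaluation of the Chebyshev polynomial of the second kind. -/
noncomputable def Ucheb (n : ℤ) (x : ℝ) : ℝ := (Polynomial.Chebyshev.U ℝ n).eval x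

/-- Evaluation of the derivative of the Chebyshev polynomial of the second kind. -/
noncomputable def Ucheb' (n : ℤ) (x : ℝ) : ℝ :=
  (Polynomial.derivative (Polynomial.Chebyshev.U ℝ n)).eval x

/-- The N×N matrix with entries 1/2 on the first off-diagonals and 0 elsewhere. -/
noncomputable def matA (N : ℕ) : Matrix (Fin N) (Fin N) ℝ :=
  fun i j => if ((i : ℤ) - (j : ℤ)).natAbs = 1 then 1/2 else 0

/-- The N×N matrix with entries 1/2 on the second off-diagonals and 0 elsewhere. -/
noncomputable def matB (N : ℕ) : Matrix (Fin N) (Fin N) ℝ :=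
  fun i j => if ((i : ℤ) - (j : ℤ)).natAbs = 2 then 1/2 else 0

/-!
Padding `v` with two zeros on each side, `(I + A - μ (I - B)) v = 0` says exactly that the padded
sequence `f` satisfies, on the `N` rows, the four-term recurrence
`f n + f (n + 4) + γ (f (n + 1) + f (n + 3)) + (2γ - 2) f (n + 2) = 0` with `γ = μ⁻¹`.
The solutions vanishing at the two left boundary points form a plane, spanned by two of them
`a`, `b` with `a 2 ≠ 0 = b 2` and `b 3 ≠ 0`; so the pencil is singular iff the `2 × 2`
determinant of `a`, `b` at the two right boundary points vanishes.

For `γ = 4x²` and `x = cos θ` the characteristic roots are `-1` (double) and `-e^{± 2iθ}`, and the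
combinations vanishing on the left are, up to normalisation,
`a n = (-1)ⁿ U_{n-1}(x) U_{n-2}(x)` and
`b n = (-1)ⁿ (U_{n-3}(x) U'_{n-1}(x) - U_{n-1}(x) U'_{n-3}(x))`.
Written this way they are polynomial in `x`, so nothing degenerates at `x = ±1`: the recurrence is
a ring identity given `U_{k+2} = 2x U_{k+1} - U_k`, and so is the value
`-4x U_{N+1}(x) U'_{N+1}(x)` of the boundary determinant, given also the Cassini identity
`U_k² + U_{k+1}² - 2x U_k U_{k+1} = 1` and its derivative.
-/

open Matrix

namespace ChebyshevPencil

variable {R : Type*} [CommRing R]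

def pencilRec (γ : R) : (ℕ → R) →ₗ[R] ℕ → R where
  toFun f n := f n + f (n + 4) + γ * (f (n + 1) + f (n + 3)) + (2 * γ - 2) * f (n + 2)
  map_add' f g := by ext n; simp only [Pi.add_apply]; ring
  map_smul' c f := by ext n; simp only [Pi.smul_apply, smul_eq_mul, RingHom.id_apply]; ring

theorem pencilRec_apply (γ : R) (f : ℕ → R) (n : ℕ) :
    pencilRec γ f n
      = f n + f (n + 4) + γ * (f (n + 1) + f (n + 3)) + (2 * γ - 2) * f (n + 2) :=
  rfl

theorem eq_zero_of_pencilRec {N : ℕ} {γ : R} {f : ℕ → R}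
    (hf : ∀ n < N, pencilRec γ f n = 0) (h0 : f 0 = 0) (h1 : f 1 = 0) (h2 : f 2 = 0)
    (h3 : f 3 = 0) :
    ∀ n < N + 4, f n = 0 := by
  intro n
  induction n using Nat.strong_induction_on with
  | _ n ih =>
    intro hn
    match n, ih with
    | 0, _ => exact h0
    | 1, _ => exact h1
    | 2, _ => exact h2
    | 3, _ => exact h3
    | m + 4, ih =>
      have hm := hf m (by omega)
      rw [pencilRec_apply, ih m (by omega) (by omega), ih (m + 1) (by omega) (by omega),
        ih (m + 2) (by omega) (by omega), ih (m + 3) (by omega) (by omega)] at hm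
      linear_combination hm

structure IsLeftSolutionBasis (γ : R) (a b : ℕ → R) : Prop where
  pencilRec_fst : pencilRec γ a = 0
  pencilRec_snd : pencilRec γ b = 0
  fst_zero : a 0 = 0
  fst_one : a 1 = 0
  snd_zero : b 0 = 0
  snd_one : b 1 = 0
  snd_two : b 2 = 0
  fst_two_ne_zero : a 2 ≠ 0
  snd_three_ne_zero : b 3 ≠ 0

theorem IsLeftSolutionBasis.exists_eq {K : Type*} [Field K] {N : ℕ} {γ : K} {a b : ℕ → K}
    (h : IsLeftSolutionBasis γ a b) {f : ℕ → K} (hf : ∀ n < N, pencilRec γ f n = 0)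
    (hf0 : f 0 = 0) (hf1 : f 1 = 0) :
    ∃ c : Fin 2 → K, ∀ n < N + 4, f n = (c 0 • a + c 1 • b) n := by
  set c₀ := f 2 / a 2
  set c₁ := (f 3 - c₀ * a 3) / b 3
  refine ⟨![c₀, c₁], fun n hn ↦ sub_eq_zero.mp ?_⟩
  set d := f - (c₀ • a + c₁ • b)
  have hd : ∀ n < N, pencilRec γ d n = 0 := fun n hn ↦ by
    simp [d, h.pencilRec_fst, h.pencilRec_snd, hf n hn]
  refine eq_zero_of_pencilRec hd ?_ ?_ ?_ ?_ n hn
  · simp [d, hf0, h.fst_zero, h.snd_zero]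
  · simp [d, hf1, h.fst_one, h.snd_one]
  · simp [d, c₀, h.snd_two, h.fst_two_ne_zero]
  · have hb3 := h.snd_three_ne_zero
    simp only [d, c₁, Pi.sub_apply, Pi.add_apply, Pi.smul_apply, smul_eq_mul]
    field_simp
    ring

section Padding

variable {M : Type*} [Zero M] {N : ℕ}

-- `v` sits at positions `2, …, N + 1`; the two zeros on each side are the boundary values
def pad (v : Fin N → M) (n : ℕ) : M :=
  if h : 2 ≤ n ∧ n < N + 2 then v ⟨n - 2, by omega⟩ else 0

theorem pad_add_two (v : Fin N → M) (i : Fin N) : pad v (i + 2) = v i := by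
  simp [pad]

theorem pad_of_lt_two (v : Fin N → M) {n : ℕ} (hn : n < 2) : pad v n = 0 :=
  dif_neg (by omega)

theorem pad_of_le (v : Fin N → M) {n : ℕ} (hn : N + 2 ≤ n) : pad v n = 0 :=
  dif_neg (by omega)

theorem pad_eq_of_boundary {g : ℕ → M} (h0 : g 0 = 0) (h1 : g 1 = 0) (hN2 : g (N + 2) = 0)
    (hN3 : g (N + 3) = 0) : ∀ n < N + 4, pad (fun i : Fin N ↦ g (i + 2)) n = g n := by
  intro n hn
  unfold pad
  split_ifs with h
  · exact congrArg g (Nat.sub_add_cancel h.1)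
  · obtain rfl | rfl | rfl | rfl : n = 0 ∨ n = 1 ∨ n = N + 2 ∨ n = N + 3 := by omega
    all_goals simp_all

end Padding

theorem sum_ite_eq_pad {M : Type*} [AddCommMonoid M] {N : ℕ} (v : Fin N → M) (m : ℕ) :
    ∑ j : Fin N, (if (j : ℕ) + 2 = m then v j else 0) = pad v m := by
  by_cases h : 2 ≤ m ∧ m < N + 2
  · rw [Finset.sum_eq_single ⟨m - 2, by omega⟩]
    · simp [pad, h, show m - 2 + 2 = m by omega]
    · intro j _ hj
      rw [if_neg]
      exact fun h' ↦ hj (Fin.ext (by simp only; omega))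
    · simp
  · rw [pad, dif_neg h]
    exact Finset.sum_eq_zero fun j _ ↦ if_neg (by omega)

-- `k ≤ 2` keeps `i + 2 - k` clear of truncated subtraction
theorem sum_band_mul {N k : ℕ} (hk : 1 ≤ k) (hk' : k ≤ 2) (c : R) (v : Fin N → R)
    (i : Fin N) :
    ∑ j : Fin N, (if ((i : ℤ) - (j : ℤ)).natAbs = k then c else 0) * v j
      = c * (pad v (i + 2 - k) + pad v (i + 2 + k)) := by
  have hsplit : ∀ j : Fin N, (if ((i : ℤ) - (j : ℤ)).natAbs = k then c else 0) * v j
      = c * ((if (j : ℕ) + 2 = i + 2 - k then v j else 0)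
        + (if (j : ℕ) + 2 = i + 2 + k then v j else 0)) := by
    intro j
    split_ifs <;> first | omega | ring
  rw [Finset.sum_congr rfl fun j _ ↦ hsplit j, ← Finset.mul_sum, Finset.sum_add_distrib,
    sum_ite_eq_pad, sum_ite_eq_pad]

theorem matA_mulVec_apply {N : ℕ} (v : Fin N → ℝ) (i : Fin N) :
    (matA N *ᵥ v) i = (pad v (i + 1) + pad v (i + 3)) / 2 := by
  rw [mulVec, dotProduct]
  simp only [matA]
  rw [sum_band_mul le_rfl one_le_two, show (i : ℕ) + 2 - 1 = i + 1 by omega]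
  ring

theorem matB_mulVec_apply {N : ℕ} (v : Fin N → ℝ) (i : Fin N) :
    (matB N *ᵥ v) i = (pad v i + pad v (i + 4)) / 2 := by
  rw [mulVec, dotProduct]
  simp only [matB]
  rw [sum_band_mul one_le_two le_rfl, add_tsub_cancel_right,
    show (i : ℕ) + 2 + 2 = i + 4 by omega]
  ring

noncomputable def pencil (N : ℕ) (μ : ℝ) : Matrix (Fin N) (Fin N) ℝ :=
  (1 + matA N) - μ • (1 - matB N)

theorem pencil_mulVec_apply {N : ℕ} {μ : ℝ} (hμ : μ ≠ 0) (v : Fin N → ℝ) (i : Fin N) :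
    (pencil N μ *ᵥ v) i = μ / 2 * pencilRec μ⁻¹ (pad v) i := by
  simp only [pencil, sub_mulVec, add_mulVec, smul_mulVec,
    one_mulVec, Pi.sub_apply, Pi.add_apply, Pi.smul_apply, smul_eq_mul,
    matA_mulVec_apply, matB_mulVec_apply, pencilRec_apply, ← pad_add_two v i]
  field_simp
  ring

theorem pencil_mulVec_eq_zero_iff {N : ℕ} {μ : ℝ} (hμ : μ ≠ 0) (v : Fin N → ℝ) :
    pencil N μ *ᵥ v = 0 ↔ ∀ n < N, pencilRec μ⁻¹ (pad v) n = 0 := by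
  simp only [funext_iff, Pi.zero_apply, pencil_mulVec_apply hμ, mul_eq_zero,
    div_eq_zero_iff, hμ, two_ne_zero, or_self, false_or]
  exact ⟨fun h n hn ↦ h ⟨n, hn⟩, fun h i ↦ h i i.isLt⟩

section Criterion

variable {N : ℕ} {μ : ℝ} {a b : ℕ → ℝ}

theorem boundary_mulVec_eq_zero_iff (c : Fin 2 → ℝ) :
    !![a (N + 2), b (N + 2); a (N + 3), b (N + 3)] *ᵥ c = 0
      ↔ (c 0 • a + c 1 • b) (N + 2) = 0 ∧ (c 0 • a + c 1 • b) (N + 3) = 0 := by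
  simp [funext_iff, Fin.forall_fin_two, dotProduct, Fin.sum_univ_two, mul_comm]

theorem exists_boundary_of_mulVec_eq_zero (hμ : μ ≠ 0) (h : IsLeftSolutionBasis μ⁻¹ a b)
    {v : Fin N → ℝ} (hv : v ≠ 0) (hMv : pencil N μ *ᵥ v = 0) :
    ∃ c : Fin 2 → ℝ,
      c ≠ 0 ∧ (c 0 • a + c 1 • b) (N + 2) = 0 ∧ (c 0 • a + c 1 • b) (N + 3) = 0 := by
  obtain ⟨c, hc⟩ := h.exists_eq ((pencil_mulVec_eq_zero_iff hμ v).1 hMv)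
    (pad_of_lt_two v (by norm_num)) (pad_of_lt_two v (by norm_num))
  refine ⟨c, fun hc0 ↦ hv ?_, ?_, ?_⟩
  · ext i
    simpa [hc0] using (pad_add_two v i).symm.trans (hc (i + 2) (by omega))
  · rw [← hc _ (by omega), pad_of_le v le_rfl]
  · rw [← hc _ (by omega), pad_of_le v (by omega)]

theorem exists_mulVec_eq_zero_of_boundary (hμ : μ ≠ 0) (h : IsLeftSolutionBasis μ⁻¹ a b)
    {c : Fin 2 → ℝ} (hc : c ≠ 0) (hN2 : (c 0 • a + c 1 • b) (N + 2) = 0)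
    (hN3 : (c 0 • a + c 1 • b) (N + 3) = 0) :
    ∃ v ≠ 0, pencil N μ *ᵥ v = 0 := by
  set g := c 0 • a + c 1 • b
  have hg : pencilRec μ⁻¹ g = 0 := by simp [g, h.pencilRec_fst, h.pencilRec_snd]
  have hpad := pad_eq_of_boundary (by simp [g, h.fst_zero, h.snd_zero])
    (by simp [g, h.fst_one, h.snd_one]) hN2 hN3
  refine ⟨fun i ↦ g (i + 2), fun hv ↦ hc ?_, ?_⟩
  · have h2 := hpad 2 (by omega)
    have h3 := hpad 3 (by omega)
    rw [hv] at h2 h3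
    simp only [pad, Pi.zero_apply, dite_eq_ite, ite_self] at h2 h3
    have hc0 : c 0 = 0 := by simpa [g, h.snd_two, h.fst_two_ne_zero] using h2.symm
    have hc1 : c 1 = 0 := by simpa [g, hc0, h.snd_three_ne_zero] using h3.symm
    ext i
    fin_cases i <;> assumption
  · rw [pencil_mulVec_eq_zero_iff hμ]
    intro n hn
    rw [pencilRec_apply, hpad n (by omega), hpad (n + 1) (by omega), hpad (n + 2) (by omega),
      hpad (n + 3) (by omega), hpad (n + 4) (by omega), ← pencilRec_apply, hg, Pi.zero_apply]

theorem det_pencil_eq_zero_iff (hμ : μ ≠ 0) (h : IsLeftSolutionBasis μ⁻¹ a b) :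
    (pencil N μ).det = 0 ↔ a (N + 2) * b (N + 3) - a (N + 3) * b (N + 2) = 0 := by
  have hW : a (N + 2) * b (N + 3) - a (N + 3) * b (N + 2)
      = !![a (N + 2), b (N + 2); a (N + 3), b (N + 3)].det := by
    rw [det_fin_two_of]; ring
  rw [hW, ← exists_mulVec_eq_zero_iff, ← exists_mulVec_eq_zero_iff]
  simp only [boundary_mulVec_eq_zero_iff]
  constructor
  · rintro ⟨v, hv, hMv⟩
    exact exists_boundary_of_mulVec_eq_zero hμ h hv hMv
  · rintro ⟨c, hc, hN2, hN3⟩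
    exact exists_mulVec_eq_zero_of_boundary hμ h hc hN2 hN3

end Criterion

section ChebyshevSolutions

variable {x : R} {w w' : ℕ → R}

def signedProd (w : ℕ → R) (n : ℕ) : R := (-1) ^ n * (w (n + 2) * w (n + 1))

def signedCross (w w' : ℕ → R) (n : ℕ) : R := (-1) ^ n * (w n * w' (n + 2) - w (n + 2) * w' n)

theorem pencilRec_signedProd (hw : ∀ n, w (n + 2) = 2 * x * w (n + 1) - w n) :
    pencilRec (4 * x ^ 2) (signedProd w) = 0 := by
  ext n
  simp only [pencilRec_apply, signedProd, pow_add, Pi.zero_apply, hw]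
  ring

theorem pencilRec_signedCross (hw : ∀ n, w (n + 2) = 2 * x * w (n + 1) - w n)
    (hw' : ∀ n, w' (n + 2) = 2 * w (n + 1) + 2 * x * w' (n + 1) - w' n) :
    pencilRec (4 * x ^ 2) (signedCross w w') = 0 := by
  ext n
  simp only [pencilRec_apply, signedCross, pow_add, Pi.zero_apply, hw, hw']
  ring

theorem signedProd_mul_signedCross_sub (hw : ∀ n, w (n + 2) = 2 * x * w (n + 1) - w n)
    (hw' : ∀ n, w' (n + 2) = 2 * w (n + 1) + 2 * x * w' (n + 1) - w' n) (k : ℕ)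
    (hC : w (k + 1) ^ 2 + w (k + 2) ^ 2 - 2 * x * w (k + 1) * w (k + 2) = 1)
    (hD : w (k + 1) * w' (k + 1) + w (k + 2) * w' (k + 2)
      = w (k + 1) * w (k + 2) + x * (w' (k + 1) * w (k + 2) + w (k + 1) * w' (k + 2))) :
    signedProd w k * signedCross w w' (k + 1) - signedProd w (k + 1) * signedCross w w' k
      = -4 * x * w (k + 2) * w' (k + 2) := by
  have h3 : w (k + 3) = 2 * x * w (k + 2) - w (k + 1) := hw (k + 1)
  have h0 : w k = 2 * x * w (k + 1) - w (k + 2) := by linear_combination hw k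
  have h3' : w' (k + 3) = 2 * w (k + 2) + 2 * x * w' (k + 2) - w' (k + 1) := hw' (k + 1)
  have h0' : w' k = 2 * w (k + 1) + 2 * x * w' (k + 1) - w' (k + 2) := by
    linear_combination hw' k
  simp only [signedProd, signedCross, pow_succ]
  rw [h3, h0, h3', h0']
  obtain h | h := neg_one_pow_eq_or R k <;> rw [h] <;>
    linear_combination (-4 * x * w (k + 2) * w' (k + 2)) * hC + (4 * x * w (k + 2) ^ 2) * hD

end ChebyshevSolutions

-- shifted so that `chebSeq x (n + 3) = U_n(x)`, which makes `signedProd` vanish at `0` and `1`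
noncomputable def chebSeq (x : R) (n : ℕ) : R := (U R ((n : ℤ) - 3)).eval x

noncomputable def chebSeq' (x : R) (n : ℕ) : R := (derivative (U R ((n : ℤ) - 3))).eval x

theorem chebSeq_add_two (x : R) (n : ℕ) :
    chebSeq x (n + 2) = 2 * x * chebSeq x (n + 1) - chebSeq x n := by
  simp only [chebSeq, Nat.cast_add, Nat.cast_ofNat, Nat.cast_one]
  rw [show (n : ℤ) + 2 - 3 = (n : ℤ) - 3 + 2 by ring,
    show (n : ℤ) + 1 - 3 = (n : ℤ) - 3 + 1 by ring, U_add_two]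
  simp

theorem chebSeq'_add_two (x : R) (n : ℕ) :
    chebSeq' x (n + 2) = 2 * chebSeq x (n + 1) + 2 * x * chebSeq' x (n + 1) - chebSeq' x n := by
  simp only [chebSeq, chebSeq', Nat.cast_add, Nat.cast_ofNat, Nat.cast_one]
  rw [show (n : ℤ) + 2 - 3 = (n : ℤ) - 3 + 2 by ring,
    show (n : ℤ) + 1 - 3 = (n : ℤ) - 3 + 1 by ring, U_add_two]
  simp only [derivative_sub, derivative_mul, derivative_ofNat, derivative_X, eval_add, eval_sub,
    eval_mul, eval_ofNat, eval_X, eval_zero, eval_one]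
  ring

theorem chebSeq_zero (x : R) : chebSeq x 0 = -(2 * x) := by
  simp [chebSeq, show U R (-3) = -U R 1 from U_neg R 3, U_one]

theorem chebSeq_one (x : R) : chebSeq x 1 = -1 := by simp [chebSeq, U_neg_two]
theorem chebSeq_two (x : R) : chebSeq x 2 = 0 := by simp [chebSeq, U_neg_one]
theorem chebSeq_three (x : R) : chebSeq x 3 = 1 := by simp [chebSeq]
theorem chebSeq_four (x : R) : chebSeq x 4 = 2 * x := by simp [chebSeq, U_one]

theorem chebSeq'_zero (x : R) : chebSeq' x 0 = -2 := by
  simp [chebSeq', show U R (-3) = -U R 1 from U_neg R 3, U_one]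

theorem chebSeq'_one (x : R) : chebSeq' x 1 = 0 := by simp [chebSeq', U_neg_two]
theorem chebSeq'_two (x : R) : chebSeq' x 2 = 0 := by simp [chebSeq', U_neg_one]
theorem chebSeq'_three (x : R) : chebSeq' x 3 = 0 := by simp [chebSeq']
theorem chebSeq'_five (x : R) : chebSeq' x 5 = 8 * x := by simp [chebSeq', U_two]; ring

theorem chebSeq_cassini (x : R) (n : ℕ) :
    chebSeq x n ^ 2 + chebSeq x (n + 1) ^ 2 - 2 * x * chebSeq x n * chebSeq x (n + 1) = 1 := by
  induction n with
  | zero => rw [chebSeq_zero, chebSeq_one]; ring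
  | succ n ih => rw [chebSeq_add_two]; linear_combination ih

theorem chebSeq_cassini_deriv (x : R) (n : ℕ) :
    chebSeq x n * chebSeq' x n + chebSeq x (n + 1) * chebSeq' x (n + 1)
      = chebSeq x n * chebSeq x (n + 1)
        + x * (chebSeq' x n * chebSeq x (n + 1) + chebSeq x n * chebSeq' x (n + 1)) := by
  induction n with
  | zero => rw [chebSeq_zero, chebSeq_one, chebSeq'_zero, chebSeq'_one]; ring
  | succ n ih => rw [chebSeq_add_two, chebSeq'_add_two]; linear_combination ih

theorem isLeftSolutionBasis_chebSeq {K : Type*} [Field K] [CharZero K] {x : K} (hx : x ≠ 0) :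
    IsLeftSolutionBasis (4 * x ^ 2) (signedProd (chebSeq x))
      (signedCross (chebSeq x) (chebSeq' x)) where
  pencilRec_fst := pencilRec_signedProd (chebSeq_add_two x)
  pencilRec_snd := pencilRec_signedCross (chebSeq_add_two x) (chebSeq'_add_two x)
  fst_zero := by simp [signedProd, chebSeq_two]
  fst_one := by simp [signedProd, chebSeq_two]
  snd_zero := by simp [signedCross, chebSeq_two, chebSeq'_two]
  snd_one := by simp [signedCross, chebSeq'_one, chebSeq'_three]
  snd_two := by simp [signedCross, chebSeq_two, chebSeq'_two]
  fst_two_ne_zero := by simp [signedProd, chebSeq_three, chebSeq_four, hx]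
  snd_three_ne_zero := by simp [signedCross, chebSeq_three, chebSeq'_three, chebSeq'_five, hx]

theorem det_pencil_chebyshev_eq_zero_iff (N : ℕ) {x : ℝ} (hx : x ≠ 0) :
    (pencil N (1 / (4 * x ^ 2))).det = 0
      ↔ (U ℝ (N + 1)).eval x * (derivative (U ℝ (N + 1))).eval x = 0 := by
  have hμ : 1 / (4 * x ^ 2) ≠ 0 := by positivity
  have hγ : (1 / (4 * x ^ 2))⁻¹ = 4 * x ^ 2 := by rw [one_div, inv_inv]
  rw [det_pencil_eq_zero_iff hμ (hγ ▸ isLeftSolutionBasis_chebSeq hx),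
    signedProd_mul_signedCross_sub (chebSeq_add_two x) (chebSeq'_add_two x) (N + 2)
      (chebSeq_cassini x _) (chebSeq_cassini_deriv x _)]
  have hidx : ((N + 2 + 2 : ℕ) : ℤ) - 3 = N + 1 := by push_cast; ring
  simp only [chebSeq, chebSeq', hidx, mul_assoc, mul_eq_zero, hx, show (-4 : ℝ) ≠ 0 by norm_num,
    false_or]

end ChebyshevPencil

theorem stmt1_general (N : ℕ) (x : ℝ) (hx : x ≠ 0) :
    (((1 : Matrix (Fin N) (Fin N) ℝ) + matA N)
        - (1 / (4 * x ^ 2)) • ((1 : Matrix (Fin N) (Fin N) ℝ) - matB N)).det = 0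
      ↔ Ucheb (N + 1) x * Ucheb' (N + 1) x = 0 :=
  ChebyshevPencil.det_pencil_chebyshev_eq_zero_iff N hx

theorem stmt1 (N : ℕ) (hN : 0 < N) (x : ℝ) (hx : x ≠ 0) :
    (((1 : Matrix (Fin N) (Fin N) ℝ) + matA N)
        - (1 / (4 * x ^ 2)) • ((1 : Matrix (Fin N) (Fin N) ℝ) - matB N)).det = 0
      ↔ Ucheb (N + 1) x * Ucheb' (N + 1) x = 0 :=
  stmt1_general N x hx
end

section
/- Let N be a positive integer, and let A, B, I be the matrices defined as usual. Then both matrices I + A and I − B are positive definite. -/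
open Polynomial Chebyshev

/-
Let `S` be the shift matrix `S i j = [j = i + d]` with `d > 0`. It is strictly upper triangular,
so `1 + s • S` has determinant one, and
`1 + s • (S + Sᵀ) / 2 = ((1 + s • S)ᵀ * (1 + s • S)) / 2 + (1 - s ^ 2 • Sᵀ * S) / 2`.
The first summand is positive definite, and `Sᵀ * S` is the diagonal projection onto the
coordinates `i ≥ d`, so the second is positive semidefinite as soon as `s ^ 2 ≤ 1`.
Now `A = (S + Sᵀ) / 2` for `d = 1` and `B = (S + Sᵀ) / 2` for `d = 2`; take `s = 1` and `s = -1`.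
-/

open Matrix

def shiftMatrix (R : Type*) [Zero R] [One R] (N d : ℕ) : Matrix (Fin N) (Fin N) R :=
  fun i j => if (i : ℕ) + d = j then 1 else 0

section

variable {R : Type*} {N d : ℕ}

lemma shiftMatrix_transpose_mul_self [Semiring R] :
    (shiftMatrix R N d)ᵀ * shiftMatrix R N d =
      diagonal fun i : Fin N => if d ≤ (i : ℕ) then (1 : R) else 0 := by
  ext i j
  simp only [mul_apply, transpose_apply, shiftMatrix, diagonal_apply, ite_zero_mul_ite_zero,
    mul_one]
  rcases eq_or_ne i j with rfl | hij
  · simp only [and_self, if_true]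
    split_ifs with hdi
    · rw [Finset.sum_eq_single ⟨i - d, by omega⟩]
      · simp only [Nat.sub_add_cancel hdi, if_true]
      · intro k _ hk
        refine if_neg fun h => hk (Fin.ext ?_)
        simp only
        omega
      · simp
    · exact Finset.sum_eq_zero fun k _ => if_neg (by omega)
  · rw [if_neg hij]
    refine Finset.sum_eq_zero fun k _ => ?_
    have : (k : ℕ) + d ≠ j ∨ (k : ℕ) + d ≠ i := by
      by_contra! h
      exact hij (Fin.ext (h.2.symm.trans h.1))
    rcases this with h | h <;> simp [h]

lemma det_one_add_smul_shiftMatrix [CommRing R] (hd : 0 < d) (s : R) :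
    (1 + s • shiftMatrix R N d : Matrix (Fin N) (Fin N) R).det = 1 := by
  rw [det_of_isUpperTriangular]
  · simp [shiftMatrix, hd.ne']
  · intro i j hij
    simp only [id] at hij
    have : (i : ℕ) + d ≠ j := by omega
    simp [shiftMatrix, this, hij.ne']

lemma shiftMatrix_add_transpose [Semiring R] (hd : 0 < d) :
    shiftMatrix R N d + (shiftMatrix R N d)ᵀ =
      of fun i j : Fin N => if ((i : ℤ) - (j : ℤ)).natAbs = d then (1 : R) else 0 := by
  ext i j
  simp only [Matrix.add_apply, transpose_apply, of_apply, shiftMatrix]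
  split_ifs <;> first | omega | simp

lemma one_add_smul_shiftMatrix_symm_eq (s : ℝ) :
    1 + s • ((2 : ℝ)⁻¹ • (shiftMatrix ℝ N d + (shiftMatrix ℝ N d)ᵀ)) =
      (2 : ℝ)⁻¹ • ((1 + s • shiftMatrix ℝ N d)ᵀ * (1 + s • shiftMatrix ℝ N d)) +
        (2 : ℝ)⁻¹ • (1 - s ^ 2 • ((shiftMatrix ℝ N d)ᵀ * shiftMatrix ℝ N d)) := by
  simp only [transpose_add, transpose_one, transpose_smul, add_mul, mul_add, one_mul, mul_one,
    smul_mul_assoc, mul_smul_comm, smul_smul]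
  module

lemma posSemidef_one_sub_smul_shiftMatrix_transpose_mul_self {s : ℝ} (hs : s ^ 2 ≤ 1) :
    (1 - s ^ 2 • ((shiftMatrix ℝ N d)ᵀ * shiftMatrix ℝ N d)).PosSemidef := by
  rw [shiftMatrix_transpose_mul_self, ← diagonal_one, ← diagonal_smul, diagonal_sub]
  refine posSemidef_diagonal_iff.mpr fun i => ?_
  simp only [Pi.smul_apply, smul_eq_mul, sub_nonneg]
  split_ifs <;> simp [hs]

theorem posDef_one_add_smul_shiftMatrix_symm (hd : 0 < d) {s : ℝ} (hs : s ^ 2 ≤ 1) :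
    (1 + s • ((2 : ℝ)⁻¹ • (shiftMatrix ℝ N d + (shiftMatrix ℝ N d)ᵀ))).PosDef := by
  have hinj : Function.Injective (1 + s • shiftMatrix ℝ N d : Matrix (Fin N) (Fin N) ℝ).mulVec :=
    mulVec_injective_of_det_ne_zero (by simp [det_one_add_smul_shiftMatrix hd])
  rw [one_add_smul_shiftMatrix_symm_eq]
  exact ((PosDef.conjTranspose_mul_self _ hinj).smul (by norm_num)).add_posSemidef
    ((posSemidef_one_sub_smul_shiftMatrix_transpose_mul_self hs).smul (by norm_num))

lemma matA_eq : matA N = (2 : ℝ)⁻¹ • (shiftMatrix ℝ N 1 + (shiftMatrix ℝ N 1)ᵀ) := by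
  rw [shiftMatrix_add_transpose one_pos]
  ext i j
  simp [matA]

lemma matB_eq : matB N = (2 : ℝ)⁻¹ • (shiftMatrix ℝ N 2 + (shiftMatrix ℝ N 2)ᵀ) := by
  rw [shiftMatrix_add_transpose two_pos]
  ext i j
  simp [matB]

end

theorem stmt2_general (N : ℕ) :
    ((1 : Matrix (Fin N) (Fin N) ℝ) + matA N).PosDef
      ∧ ((1 : Matrix (Fin N) (Fin N) ℝ) - matB N).PosDef := by
  constructor
  · have h := posDef_one_add_smul_shiftMatrix_symm (N := N) one_pos (s := 1) (by norm_num)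
    rwa [one_smul, ← matA_eq] at h
  · have h := posDef_one_add_smul_shiftMatrix_symm (N := N) two_pos (s := -1) (by norm_num)
    rwa [neg_one_smul, ← sub_eq_add_neg, ← matB_eq] at h

theorem stmt2 (N : ℕ) (hN : 0 < N) :
    ((1 : Matrix (Fin N) (Fin N) ℝ) + matA N).PosDef
      ∧ ((1 : Matrix (Fin N) (Fin N) ℝ) - matB N).PosDef :=
  stmt2_general N
end

section
/- Let N be a positive integer and let j be an integer with 1 ≤ j ≤ ⌊(N+1)/2⌋. Set μ = cos(jπ/(N+2)), and let W ∈ ℝ^N be the vector with k-th coordinate W_k = (−1)^k U_{k−1}(μ) U_k(μ) for k = 1,…,N. Then ((I+A) − (1/(4μ²))(I−B)) W = 0; that is, W is a principal (generalized eigen-) vector of the matrix pencil I+A − λ(I−B) corresponding to the characteristic number λ = (1/4)sec²(jπ/(N+2)). -/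
open Polynomial Chebyshev

/-!
Extend `W` to `ℤ` by `w k = (-1)^(k+1) U_k(μ) U_{k+1}(μ)`. For any sequence with
`u (m+2) = c u (m+1) - u m`, the products `p k = u k u (k+1)` satisfy
`2 p k - p (k-2) - p (k+2) = c² (2 p k - p (k-1) - p (k+1))`; with `c = 2μ` and the alternating
sign, this says that every row of the infinite pentadiagonal pencil with `λ = 1/(4μ²)`
annihilates `w`. Truncating to `0, …, N-1` changes nothing because `w` vanishes at `-2, -1`
(as `U_{-1} = 0`) and at `N, N+1` (as `μ = cos (jπ/(N+2))` is a root of `U_{N+1}`).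
-/

open Matrix

theorem Ucheb_add_two (m : ℤ) (x : ℝ) :
    Ucheb (m + 2) x = 2 * x * Ucheb (m + 1) x - Ucheb m x := by
  simp [Ucheb, U_add_two]

theorem Ucheb_cos_eq_zero {n : ℤ} {t : ℝ} (ht : Real.sin t ≠ 0)
    (h : Real.sin ((n + 1) * t) = 0) : Ucheb n (Real.cos t) = 0 := by
  have := U_real_cos t n
  rw [h] at this
  exact (mul_eq_zero.1 this).resolve_right ht

theorem consecutive_product_identity {R : Type*} [CommRing R] {c : R} {u : ℤ → R}
    (hu : ∀ m, u (m + 2) = c * u (m + 1) - u m) (k : ℤ) :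
    2 * (u k * u (k + 1)) - (u (k - 2) * u (k - 1) + u (k + 2) * u (k + 3))
      = c ^ 2 * (2 * (u k * u (k + 1)) - (u (k - 1) * u k + u (k + 1) * u (k + 2))) := by
  have h2 := hu k
  have h3 := hu (k + 1)
  have hm1 := hu (k - 1)
  have hm2 := hu (k - 2)
  rw [show k + 1 + 2 = k + 3 by ring, show k + 1 + 1 = k + 2 by ring] at h3
  rw [show k - 1 + 2 = k + 1 by ring, sub_add_cancel] at hm1
  rw [show k - 2 + 2 = k by ring, show k - 2 + 1 = k - 1 by ring] at hm2
  replace hm1 : u (k - 1) = c * u k - u (k + 1) := by linear_combination hm1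
  replace hm2 : u (k - 2) = c * u (k - 1) - u k := by linear_combination hm2
  rw [hm2, hm1, h3, h2]
  ring

noncomputable def chebWeight (μ : ℝ) (k : ℤ) : ℝ :=
  (-1 : ℝ) ^ (k + 1) * Ucheb k μ * Ucheb (k + 1) μ

theorem chebWeight_eq_zero_of_root {μ : ℝ} {n m : ℤ} (h : Ucheb n μ = 0) (h₁ : n - 1 ≤ m)
    (h₂ : m ≤ n) : chebWeight μ m = 0 := by
  obtain rfl | rfl : m = n ∨ m = n - 1 := by omega
  all_goals simp [chebWeight, h]

theorem chebWeight_pencil_row {μ : ℝ} (hμ : μ ≠ 0) (k : ℤ) :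
    chebWeight μ k + (chebWeight μ (k - 1) + chebWeight μ (k + 1)) / 2
      - 1 / (4 * μ ^ 2) * (chebWeight μ k - (chebWeight μ (k - 2) + chebWeight μ (k + 2)) / 2)
      = 0 := by
  have hp :=
    consecutive_product_identity (u := fun m => Ucheb m μ) (fun m => Ucheb_add_two m μ) k
  beta_reduce at hp
  have hsign (d m : ℤ) (hm : m = k + 1 + d) : (-1 : ℝ) ^ m = (-1) ^ (k + 1) * (-1) ^ d := by
    rw [hm, zpow_add₀ (by norm_num)]
  simp only [chebWeight, sub_add_cancel, show k - 2 + 1 = k - 1 by ring,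
    show k + 1 + 1 = k + 2 by ring, show k + 2 + 1 = k + 3 by ring]
  rw [hsign (-1) k (by ring), hsign (-2) (k - 1) (by ring), hsign 1 (k + 2) (by ring),
    hsign 2 (k + 3) (by ring)]
  field_simp
  linear_combination -(-1 : ℝ) ^ (k + 1) * hp

noncomputable def bandMatrix (N d : ℕ) : Matrix (Fin N) (Fin N) ℝ :=
  fun i j => if ((i : ℤ) - (j : ℤ)).natAbs = d then 1 / 2 else 0

theorem Fin.sum_ite_coe_eq {M : Type*} [AddCommMonoid M] (N : ℕ) (m : ℤ) (f : ℤ → M) :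
    ∑ k : Fin N, (if (k : ℤ) = m then f k else 0) = if 0 ≤ m ∧ m < N then f m else 0 := by
  split_ifs with h
  · lift m to ℕ using h.1
    rw [Finset.sum_eq_single ⟨m, by omega⟩
      (fun k _ hk => if_neg fun e => hk (Fin.ext (by simpa using e))) (by simp)]
    simp
  · exact Finset.sum_eq_zero fun k _ => if_neg (by omega)

theorem bandMatrix_mulVec {N d : ℕ} (hd : 0 < d) {w : ℤ → ℝ}
    (hlow : ∀ m : ℤ, -d ≤ m → m < 0 → w m = 0)
    (hhigh : ∀ m : ℤ, N ≤ m → m < N + d → w m = 0) (i : Fin N) :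
    (bandMatrix N d *ᵥ fun k : Fin N => w k) i = (w (i - d) + w (i + d)) / 2 := by
  have hentry (k : Fin N) : bandMatrix N d i k * w k
      = (if (k : ℤ) = i - d then w k / 2 else 0) + (if (k : ℤ) = i + d then w k / 2 else 0) := by
    unfold bandMatrix
    split_ifs <;> first | (exfalso; omega) | ring
  have hsum (m : ℤ) := Fin.sum_ite_coe_eq N m (fun m => w m / 2)
  simp only [mulVec, dotProduct, hentry, Finset.sum_add_distrib, hsum]
  have := i.isLt
  split_ifs with h₁ h₂ h₂
  · ring
  · rw [hhigh (i + d) (by omega) (by omega)]; ring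
  · rw [hlow (i - d) (by omega) (by omega)]; ring
  · rw [hlow (i - d) (by omega) (by omega), hhigh (i + d) (by omega) (by omega)]; ring

theorem mul_pi_div_mem_Ioo {j n : ℕ} (hj : 0 < j) (hjn : 2 * j < n) :
    (j : ℝ) * Real.pi / n ∈ Set.Ioo 0 (Real.pi / 2) := by
  have hn : (0 : ℝ) < n := by exact_mod_cast hj.trans (by omega)
  have hjn' : 2 * (j : ℝ) < n := by exact_mod_cast hjn
  constructor
  · positivity
  · rw [div_lt_div_iff₀ hn two_pos]
    nlinarith [Real.pi_pos]

theorem pencil_mulVec_apply {N : ℕ} (t : ℝ) {w : ℤ → ℝ}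
    (hlow : ∀ m : ℤ, -2 ≤ m → m < 0 → w m = 0)
    (hhigh : ∀ m : ℤ, N ≤ m → m < N + 2 → w m = 0) (i : Fin N) :
    ((1 + matA N - t • (1 - matB N)) *ᵥ fun k : Fin N => w k) i
      = w i + (w (i - 1) + w (i + 1)) / 2 - t * (w i - (w (i - 2) + w (i + 2)) / 2) := by
  simp only [sub_mulVec, add_mulVec, smul_mulVec, one_mulVec, Pi.sub_apply, Pi.add_apply,
    Pi.smul_apply, smul_eq_mul]
  rw [show matA N = bandMatrix N 1 from rfl, show matB N = bandMatrix N 2 from rfl,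
    bandMatrix_mulVec one_pos (fun m _ h₂ => hlow m (by omega) h₂)
      (fun m h₁ _ => hhigh m h₁ (by omega)),
    bandMatrix_mulVec two_pos hlow hhigh]
  push_cast
  ring

theorem stmt3_general (N : ℕ) (j : ℕ) (hj1 : 1 ≤ j) (hj2 : j ≤ (N + 1) / 2)
    (μ : ℝ) (hμ : μ = Real.cos (j * Real.pi / (N + 2)))
    (W : Fin N → ℝ)
    (hW : ∀ i : Fin N, W i = (-1 : ℝ) ^ ((i : ℕ) + 1) * Ucheb (i : ℕ) μ * Ucheb ((i : ℕ) + 1) μ) :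
    Matrix.mulVec (((1 : Matrix (Fin N) (Fin N) ℝ) + matA N)
        - (1 / (4 * μ ^ 2)) • ((1 : Matrix (Fin N) (Fin N) ℝ) - matB N)) W = 0 := by
  obtain ⟨hθ0, hθ⟩ := mul_pi_div_mem_Ioo (n := N + 2) hj1 (by omega)
  push_cast at hθ0 hθ
  have hμ0 : μ ≠ 0 := hμ ▸ (Real.cos_pos_of_mem_Ioo ⟨by linarith, hθ⟩).ne'
  have hroot : Ucheb (N + 1) μ = 0 := by
    refine hμ ▸ Ucheb_cos_eq_zero (Real.sin_pos_of_pos_of_lt_pi hθ0 (by linarith)).ne' ?_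
    rw [show ((N + 1 : ℤ) + 1 : ℝ) * (j * Real.pi / (N + 2)) = j * Real.pi by
      field_simp; push_cast; ring]
    exact Real.sin_nat_mul_pi j
  obtain rfl : W = fun i : Fin N => chebWeight μ i := funext fun i => by
    rw [hW, chebWeight]; norm_cast
  funext i
  rw [pencil_mulVec_apply (w := chebWeight μ) _
    (fun m h₁ h₂ =>
      chebWeight_eq_zero_of_root (n := -1) (by simp [Ucheb]) (by omega) (by omega))
    (fun m h₁ h₂ => chebWeight_eq_zero_of_root hroot (by omega) (by omega))]
  exact chebWeight_pencil_row hμ0 i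

theorem stmt3 (N : ℕ) (hN : 0 < N) (j : ℕ) (hj1 : 1 ≤ j) (hj2 : j ≤ (N + 1) / 2)
    (μ : ℝ) (hμ : μ = Real.cos (j * Real.pi / (N + 2)))
    (W : Fin N → ℝ)
    (hW : ∀ i : Fin N, W i = (-1 : ℝ) ^ ((i : ℕ) + 1) * Ucheb (i : ℕ) μ * Ucheb ((i : ℕ) + 1) μ) :
    Matrix.mulVec (((1 : Matrix (Fin N) (Fin N) ℝ) + matA N)
        - (1 / (4 * μ ^ 2)) • ((1 : Matrix (Fin N) (Fin N) ℝ) - matB N)) W = 0 :=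
  stmt3_general N j hj1 hj2 μ hμ W hW
end

section
/- Let N be a positive integer, let k be an integer with 1 ≤ k ≤ N, and let x be a real number with x² ≠ 1. Then 2·∑_{j=1}^{N−k} U_j(x) U_{j+k−1}(x) = (1/(1−x²)) · ( (N−k)·T_{k−1}(x) − T_{N+2}(x)·U_{N−k−1}(x) ), where for k = N the left-hand sum is empty and U_{−1} = 0. -/
/-- Evaluation of the Chebyshev polynomial of the first kind. -/
noncomputable def Tcheb (n : ℤ) (x : ℝ) : ℝ := (Polynomial.Chebyshev.T ℝ n).eval x

namespace ChebAux

lemma u_add_two (x : ℝ) (n : ℤ) : Ucheb (n + 2) x = 2 * x * Ucheb (n + 1) x - Ucheb n x := by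
  simp [Ucheb, Polynomial.Chebyshev.U_add_two]

lemma t_add_two (x : ℝ) (n : ℤ) : Tcheb (n + 2) x = 2 * x * Tcheb (n + 1) x - Tcheb n x := by
  simp [Tcheb, Polynomial.Chebyshev.T_add_two]

lemma u_zero (x : ℝ) : Ucheb 0 x = 1 := by simp [Ucheb]

lemma u_one (x : ℝ) : Ucheb 1 x = 2 * x := by simp [Ucheb, Polynomial.Chebyshev.U_one]

lemma u_neg_one (x : ℝ) : Ucheb (-1) x = 0 := by simp [Ucheb]

lemma t_zero (x : ℝ) : Tcheb 0 x = 1 := by simp [Tcheb]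

lemma t_one (x : ℝ) : Tcheb 1 x = x := by simp [Tcheb, Polynomial.Chebyshev.T_one]

/-- Product formula: 2(1-x²) U_m U_n = T_{n-m} - T_{n+m+2}. -/
lemma prodUU (x : ℝ) (q : ℤ) : ∀ m : ℤ,
    2 * (1 - x ^ 2) * (Ucheb m x * Ucheb q x) = Tcheb (q - m) x - Tcheb (q + m + 2) x := by
  intro m
  induction m using Polynomial.Chebyshev.induct with
  | zero =>
    have h1 := t_add_two x q
    have h2 := t_add_two x (q - 2)
    have h3 : (1 - Polynomial.X ^ 2) * Polynomial.Chebyshev.U ℝ q =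
        Polynomial.X * Polynomial.Chebyshev.T ℝ (q + 1) - Polynomial.Chebyshev.T ℝ (q + 2) :=
      Polynomial.Chebyshev.one_sub_X_sq_mul_U_eq_pol_in_T ℝ q
    have h3' := congr_arg (Polynomial.eval x) h3
    simp only [Polynomial.eval_mul, Polynomial.eval_sub, Polynomial.eval_one,
      Polynomial.eval_pow, Polynomial.eval_X] at h3'
    have h3'' : (1 - x ^ 2) * Ucheb q x = x * Tcheb (q + 1) x - Tcheb (q + 2) x := h3'
    rw [u_zero]
    linear_combination (norm := ring_nf) 2 * h3'' - t_add_two x q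
  | one =>
    have h3 : (1 - Polynomial.X ^ 2) * Polynomial.Chebyshev.U ℝ q =
        Polynomial.X * Polynomial.Chebyshev.T ℝ (q + 1) - Polynomial.Chebyshev.T ℝ (q + 2) :=
      Polynomial.Chebyshev.one_sub_X_sq_mul_U_eq_pol_in_T ℝ q
    have h3' := congr_arg (Polynomial.eval x) h3
    simp only [Polynomial.eval_mul, Polynomial.eval_sub, Polynomial.eval_one,
      Polynomial.eval_pow, Polynomial.eval_X] at h3'
    have h3'' : (1 - x ^ 2) * Ucheb q x = x * Tcheb (q + 1) x - Tcheb (q + 2) x := h3'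
    rw [u_one]
    linear_combination (norm := ring_nf) 4 * x * h3'' + t_add_two x (q + 1)
      - t_add_two x (q - 1) - 2 * x * t_add_two x q
  | add_two m ih1 ih2 =>
    have h1 := u_add_two x m
    have h2 := t_add_two x (q + m + 2)
    have h3 := t_add_two x (q - m - 2)
    linear_combination (norm := ring_nf)
      2 * (1 - x ^ 2) * Ucheb q x * h1 + 2 * x * ih1 - ih2 + h2 - h3
  | neg_add_one m ih1 ih2 =>
    have h1 := u_add_two x (-m - 1)
    have h2 := t_add_two x (q + m - 1)
    have h3 := t_add_two x (q - m + 1)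
    linear_combination (norm := ring_nf)
      2 * (1 - x ^ 2) * Ucheb q x * h1 + 2 * x * ih1 - ih2 - h2 + h3

/-- T_{a+1} U_b - T_a U_{b-1} = T_{a+b+1}. -/
lemma TU_telescope (x : ℝ) (a : ℤ) : ∀ b : ℤ,
    Tcheb (a + 1) x * Ucheb b x - Tcheb a x * Ucheb (b - 1) x = Tcheb (a + b + 1) x := by
  intro b
  induction b using Polynomial.Chebyshev.induct with
  | zero => rw [u_zero]; norm_num [u_neg_one]
  | one =>
    rw [u_one, show (1:ℤ) - 1 = 0 by ring, u_zero]
    linear_combination (norm := ring_nf) -(t_add_two x a)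
  | add_two b ih1 ih2 =>
    have h1 := u_add_two x b
    have h2 := u_add_two x (b - 1)
    have h3 := t_add_two x (a + b + 1)
    linear_combination (norm := ring_nf)
      Tcheb (a + 1) x * h1 - Tcheb a x * h2 + 2 * x * ih1 - ih2 - h3
  | neg_add_one b ih1 ih2 =>
    have h1 := u_add_two x (-b - 1)
    have h2 := u_add_two x (-b - 2)
    linear_combination (norm := ring_nf)
      Tcheb (a + 1) x * h1 - Tcheb a x * h2 + 2 * x * ih1 - ih2 - t_add_two x (a - b)

/-- The summed identity. -/
lemma sumUU (x : ℝ) (K : ℤ) : ∀ M : ℕ,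
    2 * (1 - x ^ 2) * ∑ j ∈ Finset.Icc 1 M, Ucheb (j : ℤ) x * Ucheb ((j : ℤ) + K) x
      = (M : ℝ) * Tcheb K x - Tcheb ((M : ℤ) + K + 3) x * Ucheb ((M : ℤ) - 1) x := by
  intro M
  induction M with
  | zero => simp [u_neg_one]
  | succ M ih =>
    rw [Finset.sum_Icc_succ_top (by omega : 1 ≤ M + 1)]
    have hA := prodUU x ((M : ℤ) + 1 + K) ((M : ℤ) + 1)
    rw [show ((M : ℤ) + 1 + K - ((M : ℤ) + 1)) = K by ring,
      show ((M : ℤ) + 1 + K + ((M : ℤ) + 1) + 2) = 2 * (M : ℤ) + K + 4 by ring] at hA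
    have hD := TU_telescope x ((M : ℤ) + K + 3) (M : ℤ)
    rw [show ((M : ℤ) + K + 3 + 1) = (M : ℤ) + K + 4 by ring,
      show ((M : ℤ) + K + 3 + (M : ℤ) + 1) = 2 * (M : ℤ) + K + 4 by ring] at hD
    push_cast
    rw [show ((M : ℤ) + 1 + K + 3) = (M : ℤ) + K + 4 by ring,
      show ((M : ℤ) + 1 - 1) = (M : ℤ) by ring]
    linear_combination ih + hA + hD

end ChebAux

theorem stmt7 (N : ℕ) (hN : 0 < N) (k : ℕ) (hk1 : 1 ≤ k) (hk2 : k ≤ N)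
    (x : ℝ) (hx : x ^ 2 ≠ 1) :
    2 * ∑ j ∈ Finset.Icc 1 (N - k), Ucheb (j : ℤ) x * Ucheb ((j : ℤ) + k - 1) x
      = (1 / (1 - x ^ 2)) *
          (((N : ℝ) - k) * Tcheb ((k : ℤ) - 1) x
            - Tcheb ((N : ℤ) + 2) x * Ucheb ((N : ℤ) - k - 1) x) := by
  have hx1 : (1 : ℝ) - x ^ 2 ≠ 0 := by
    intro h
    apply hx
    linarith [h]
  have key := ChebAux.sumUU x ((k : ℤ) - 1) (N - k)
  have hidx : ∀ j : ℕ, (j : ℤ) + k - 1 = (j : ℤ) + ((k : ℤ) - 1) := by intro j; ring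
  simp_rw [hidx]
  have hcast : ((N - k : ℕ) : ℤ) = (N : ℤ) - k := by omega
  have hcastR : ((N - k : ℕ) : ℝ) = (N : ℝ) - k := by
    push_cast [Nat.cast_sub hk2]; ring
  rw [hcast] at key
  have h1 : ((N : ℤ) - k) + ((k : ℤ) - 1) + 3 = (N : ℤ) + 2 := by ring
  have h2 : ((N : ℤ) - k) - 1 = (N : ℤ) - k - 1 := by ring
  rw [h1, h2, hcastR] at key
  field_simp
  linarith [key]
end

section
/- Let N be an odd positive integer and set μ = cos(π(N+1)/(2(N+2))). Then for every integer k with 1 ≤ k ≤ N, 2·∑_{j=1}^{N−k} U_j(μ) U_{j+k−1}(μ) = (1/(1−μ²)) · ( (N−k)·( μ·U_{k−2}(μ) − U_{k−3}(μ) ) + U_{k+1}(μ) ), where U_n is defined for all integer indices with U_{−1} = 0 and U_{−2} = −1. -/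
open Real Finset

lemma sin_diff_aux (B s : ℝ) : Real.sin (B + s) - Real.sin (B - s) = 2 * Real.cos B * Real.sin s := by
  rw [Real.sin_add, Real.sin_sub]; ring

lemma telescope (t c : ℝ) : ∀ M : ℕ,
    (∑ j ∈ Finset.Icc 1 M, Real.cos ((2*(j:ℝ)+c)*t)) * (2*Real.sin t)
      = Real.sin ((2*(M:ℝ)+c+1)*t) - Real.sin ((c+1)*t) := by
  intro M
  induction M with
  | zero => simp
  | succ M ih =>
    rw [Finset.sum_Icc_succ_top (by omega), add_mul, ih]
    push_cast
    have key := sin_diff_aux ((2*(M:ℝ)+c+2)*t) t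
    have h1 : (2*((M:ℝ)+1)+c+1)*t = (2*(M:ℝ)+c+2)*t + t := by ring
    have h2 : (2*(M:ℝ)+c+1)*t = (2*(M:ℝ)+c+2)*t - t := by ring
    have h3 : (2*((M:ℝ)+1)+c)*t = (2*(M:ℝ)+c+2)*t := by ring
    rw [h1, h2, h3]
    linarith [key]

theorem stmt8 (N : ℕ) (hN : 0 < N) (hNodd : Odd N)
    (μ : ℝ) (hμ : μ = Real.cos (Real.pi * (N + 1) / (2 * (N + 2))))
    (k : ℕ) (hk1 : 1 ≤ k) (hk2 : k ≤ N) :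
    2 * ∑ j ∈ Finset.Icc 1 (N - k), Ucheb (j : ℤ) μ * Ucheb ((j : ℤ) + k - 1) μ
      = (1 / (1 - μ ^ 2)) *
          (((N : ℝ) - k) * (μ * Ucheb ((k : ℤ) - 2) μ - Ucheb ((k : ℤ) - 3) μ)
            + Ucheb ((k : ℤ) + 1) μ) := by
  set t : ℝ := Real.pi * (N + 1) / (2 * (N + 2)) with ht
  have hπ := Real.pi_pos
  have ht0 : 0 < t := by rw [ht]; positivity
  have htπ : t < Real.pi := by
    rw [ht, div_lt_iff₀ (by positivity)]
    have hN0 : (0:ℝ) ≤ (N:ℝ) := Nat.cast_nonneg N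
    nlinarith
  have hs : Real.sin t ≠ 0 := ne_of_gt (Real.sin_pos_of_pos_of_lt_pi ht0 htπ)
  have hU : ∀ n : ℤ, Ucheb n μ = Real.sin (((n : ℝ) + 1) * t) / Real.sin t := by
    intro n
    rw [Ucheb, hμ, eq_div_iff hs, Polynomial.Chebyshev.U_real_cos]
  -- key reflection: (2N+4)*t = (N+1)*π, N+1 even
  obtain ⟨m, hm⟩ := hNodd
  have hNm : (N : ℝ) = 2 * m + 1 := by exact_mod_cast congrArg (Nat.cast : ℕ → ℝ) hm
  have h2t : (2 * (N : ℝ) + 4) * t = ((m : ℝ) + 1) * (2 * Real.pi) := by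
    rw [ht, hNm]
    field_simp
    ring
  have hrefl : Real.sin ((2*(N:ℝ) - k + 2) * t) = - Real.sin (((k:ℝ)+2)*t) := by
    have harg : (2*(N:ℝ) - k + 2) * t = ((m:ℝ)+1) * (2*Real.pi) - ((k:ℝ)+2)*t := by
      rw [← h2t]; ring
    rw [harg, Real.sin_sub]
    have hsin : Real.sin (((m:ℝ)+1) * (2*Real.pi)) = 0 := by
      have e : ((m:ℝ)+1) * (2*Real.pi) = ((2*m+2 : ℕ) : ℝ) * Real.pi := by push_cast; ring
      rw [e, Real.sin_nat_mul_pi]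
    have hcos : Real.cos (((m:ℝ)+1) * (2*Real.pi)) = 1 := by
      have e : ((m:ℝ)+1) * (2*Real.pi) = ((m+1 : ℕ) : ℝ) * (2*Real.pi) := by push_cast; ring
      rw [e, Real.cos_nat_mul_two_pi]
    rw [hsin, hcos]; ring
  have hMk : ((N - k : ℕ) : ℝ) = (N : ℝ) - k := by
    push_cast [Nat.cast_sub hk2]; ring
  -- the telescoping sum with c = k+1, M = N-k
  have htel := telescope t ((k:ℝ)+1) (N - k)
  rw [hMk] at htel
  have htel' : (∑ j ∈ Finset.Icc 1 (N-k), Real.cos ((2*(j:ℝ)+((k:ℝ)+1))*t)) * (2*Real.sin t)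
      = -2 * Real.sin (((k:ℝ)+2)*t) := by
    rw [htel]
    have e1 : (2*((N:ℝ)-k)+((k:ℝ)+1)+1)*t = (2*(N:ℝ) - k + 2) * t := by ring
    have e2 : ((k:ℝ)+1+1)*t = ((k:ℝ)+2)*t := by ring
    rw [e1, hrefl, e2]; ring
  have e2 : (∑ j ∈ Finset.Icc 1 (N-k), Real.cos ((2*(j:ℝ)+((k:ℝ)+1))*t))
      = - Real.sin (((k:ℝ)+2)*t) / Real.sin t := by
    rw [eq_div_iff hs]
    linear_combination htel' / 2
  -- product-to-sum on each term
  have hterm : ∀ j : ℕ, 2 * (Real.sin (((j:ℝ)+1)*t) * Real.sin (((j:ℝ)+k)*t))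
      = Real.cos (((k:ℝ)-1)*t) - Real.cos ((2*(j:ℝ)+((k:ℝ)+1))*t) := by
    intro j
    have h1 : ((k:ℝ)-1)*t = (((j:ℝ)+k)*t) - (((j:ℝ)+1)*t) := by ring
    have h2 : (2*(j:ℝ)+((k:ℝ)+1))*t = (((j:ℝ)+k)*t) + (((j:ℝ)+1)*t) := by ring
    rw [h1, h2, Real.cos_sub, Real.cos_add]; ring
  have h1μ : 1 - μ ^ 2 = Real.sin t ^ 2 := by
    rw [hμ]; have := Real.sin_sq_add_cos_sq t; nlinarith
  have hcosk : μ * Ucheb ((k:ℤ)-2) μ - Ucheb ((k:ℤ)-3) μ = Real.cos (((k:ℝ)-1)*t) := by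
    rw [hU, hU, hμ]
    push_cast
    have h1 : ((k:ℝ)-2+1)*t = ((k:ℝ)-1)*t := by ring
    have h2 : ((k:ℝ)-3+1)*t = ((k:ℝ)-1)*t - t := by ring
    rw [h1, h2, Real.sin_sub]
    field_simp
    ring
  rw [hcosk, h1μ]
  have hsum : ∑ j ∈ Finset.Icc 1 (N-k), Ucheb (j : ℤ) μ * Ucheb ((j : ℤ) + k - 1) μ
      = (∑ j ∈ Finset.Icc 1 (N-k),
          Real.sin (((j:ℝ)+1)*t) * Real.sin (((j:ℝ)+k)*t)) / Real.sin t ^ 2 := by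
    rw [Finset.sum_div]
    apply Finset.sum_congr rfl
    intro j _
    rw [hU, hU]
    push_cast
    have e : ((j:ℝ)+(k:ℝ)-1+1)*t = ((j:ℝ)+k)*t := by ring
    rw [e, div_mul_div_comm, sq]
  rw [hsum, hU]
  push_cast
  have hS : ∑ j ∈ Finset.Icc 1 (N-k), Real.sin (((j:ℝ)+1)*t) * Real.sin (((j:ℝ)+k)*t)
      = (((N:ℝ)-k) * Real.cos (((k:ℝ)-1)*t) + Real.sin (((k:ℝ)+2)*t) / Real.sin t) / 2 := by
    have e1 : ∑ j ∈ Finset.Icc 1 (N-k), 2*(Real.sin (((j:ℝ)+1)*t) * Real.sin (((j:ℝ)+k)*t))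
        = ((N:ℝ)-k) * Real.cos (((k:ℝ)-1)*t)
          - ∑ j ∈ Finset.Icc 1 (N-k), Real.cos ((2*(j:ℝ)+((k:ℝ)+1))*t) := by
      rw [Finset.sum_congr rfl (fun j _ => hterm j), Finset.sum_sub_distrib,
        Finset.sum_const, Nat.card_Icc, Nat.add_sub_cancel, nsmul_eq_mul, hMk]
    rw [e2, ← Finset.mul_sum] at e1
    have : - (- Real.sin (((k:ℝ)+2)*t) / Real.sin t) = Real.sin (((k:ℝ)+2)*t) / Real.sin t := by
      ring
    rw [sub_eq_add_neg, this] at e1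
    linarith [e1]
  rw [hS]
  have e : ((k:ℝ)+1+1)*t = ((k:ℝ)+2)*t := by ring
  rw [e]
  field_simp
end

section
/- Let N be an even positive integer and let ν be the least positive root of U'_{N+1}(x), i.e., ν > 0, U'_{N+1}(ν) = 0, and U'_{N+1}(x) ≠ 0 for 0 < x < ν. Then cos((N+1)π/(2(N+2))) < ν < cos(Nπ/(2(N+1))). -/
open Real

lemma Ucheb'_key (N : ℕ) (t : ℝ) :
    Ucheb' (N + 1) (Real.cos t) * (Real.sin t) ^ 3
      = Real.sin ((N + 2) * t) * Real.cos t
        - (N + 2) * Real.cos ((N + 2) * t) * Real.sin t := by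
  set p := Polynomial.Chebyshev.U ℝ ((N : ℤ) + 1) with hp
  have hfg : (fun s : ℝ => p.eval (Real.cos s) * Real.sin s)
      = fun s : ℝ => Real.sin ((N + 2) * s) := by
    funext s
    have := Polynomial.Chebyshev.U_real_cos s ((N : ℤ) + 1)
    rw [hp, this]
    norm_num
    ring_nf
  have h1 : HasDerivAt (fun s : ℝ => p.eval (Real.cos s))
      ((Polynomial.derivative p).eval (Real.cos t) * (-Real.sin t)) t :=
    (p.hasDerivAt (Real.cos t)).comp t (Real.hasDerivAt_cos t)
  have h2 : HasDerivAt (fun s : ℝ => p.eval (Real.cos s) * Real.sin s)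
      ((Polynomial.derivative p).eval (Real.cos t) * (-Real.sin t) * Real.sin t
        + p.eval (Real.cos t) * Real.cos t) t := h1.mul (Real.hasDerivAt_sin t)
  have h3 : HasDerivAt (fun s : ℝ => Real.sin ((N + 2) * s))
      (Real.cos ((N + 2) * t) * ((N + 2) * 1)) t :=
    (Real.hasDerivAt_sin ((N + 2) * t)).comp t ((hasDerivAt_id t).const_mul ((N : ℝ) + 2))
  rw [hfg] at h2
  have heq := h2.unique h3
  have e2 : p.eval (Real.cos t) * Real.sin t = Real.sin (((N : ℝ) + 2) * t) := by
    have := congrFun hfg t; simpa using this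
  have : Ucheb' ((N : ℤ) + 1) (Real.cos t) = (Polynomial.derivative p).eval (Real.cos t) := rfl
  rw [this]
  linear_combination (-(Real.sin t)) * heq + (Real.cos t) * e2

theorem stmt9 (N : ℕ) (hN : 0 < N) (hNeven : Even N)
    (ν : ℝ) (hν0 : 0 < ν) (hνroot : Ucheb' (N + 1) ν = 0)
    (hνleast : ∀ x : ℝ, 0 < x → x < ν → Ucheb' (N + 1) x ≠ 0) :
    Real.cos ((N + 1) * Real.pi / (2 * (N + 2))) < ν
      ∧ ν < Real.cos (N * Real.pi / (2 * (N + 1))) := by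
  obtain ⟨m, hm⟩ := hNeven
  have hmN : (N : ℝ) = 2 * m := by push_cast [hm]; ring
  set s : ℝ := (-1 : ℝ) ^ m with hs
  have hs2 : s * s = 1 := by
    rw [hs, ← pow_add]
    exact (neg_one_pow_eq_one_iff_even (by norm_num)).2 ⟨m, rfl⟩
  have hpi := Real.pi_pos
  set ta : ℝ := (N + 1) * Real.pi / (2 * (N + 2)) with hta
  set tb : ℝ := N * Real.pi / (2 * (N + 1)) with htb
  have hta_pos : 0 < ta := by positivity
  have hta_lt : ta < Real.pi / 2 := by
    rw [hta, div_lt_div_iff₀ (by positivity) (by norm_num)]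
    nlinarith
  have htb_pos : 0 < tb := by
    have : (0:ℝ) < N := by exact_mod_cast hN
    positivity
  have htb_lt_ta : tb < ta := by
    rw [htb, hta, div_lt_div_iff₀ (by positivity) (by positivity)]
    nlinarith
  -- Lemma A: sign of U' on angles t ∈ [ta, π/2)
  have lemA : ∀ t : ℝ, ta ≤ t → t < Real.pi / 2 → 0 < s * Ucheb' (N + 1) (Real.cos t) := by
    intro t ht1 ht2
    have ht0 : 0 < t := lt_of_lt_of_le hta_pos ht1
    have hsint : 0 < Real.sin t := Real.sin_pos_of_pos_of_lt_pi ht0 (by linarith)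
    have hcost : 0 < Real.cos t := Real.cos_pos_of_mem_Ioo ⟨by linarith, ht2⟩
    set u : ℝ := (N + 2) * t - m * Real.pi with hu
    have hNt : ((N : ℝ) + 2) * t = u + m * Real.pi := by ring
    have hu1 : Real.pi / 2 ≤ u := by
      have h2 : ((N:ℝ) + 1) * Real.pi / 2 ≤ ((N:ℝ) + 2) * t := by
        rw [hta, div_le_iff₀ (by positivity)] at ht1
        nlinarith
      rw [hu]
      rw [hmN] at h2 ⊢
      linarith
    have hu2 : u < Real.pi := by
      have : ((N:ℝ) + 2) * t < (m + 1) * Real.pi := by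
        rw [hmN]; nlinarith
      rw [hu]; linarith
    have hsinu : 0 < Real.sin u := Real.sin_pos_of_pos_of_lt_pi (by linarith) hu2
    have hcosu : Real.cos u ≤ 0 :=
      Real.cos_nonpos_of_pi_div_two_le_of_le hu1 (by linarith)
    have e1 : Real.sin (((N:ℝ) + 2) * t) = s * Real.sin u := by
      rw [hNt, Real.sin_add_nat_mul_pi, hs]
    have e2 : Real.cos (((N:ℝ) + 2) * t) = s * Real.cos u := by
      rw [hNt, Real.cos_add_nat_mul_pi, hs]
    have key := Ucheb'_key N t
    rw [e1, e2] at key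
    have hF : 0 < s * (Ucheb' (N + 1) (Real.cos t) * (Real.sin t) ^ 3) := by
      rw [key]
      have : s * (s * Real.sin u * Real.cos t - (↑N + 2) * (s * Real.cos u) * Real.sin t)
          = Real.sin u * Real.cos t + ((N:ℝ) + 2) * (-Real.cos u) * Real.sin t := by
        linear_combination (Real.sin u * Real.cos t - ((N:ℝ) + 2) * Real.cos u * Real.sin t) * hs2
      rw [this]
      have h1 : 0 < Real.sin u * Real.cos t := mul_pos hsinu hcost
      have h2 : 0 ≤ ((N:ℝ) + 2) * (-Real.cos u) * Real.sin t := by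
        apply mul_nonneg (mul_nonneg (by positivity) (by linarith)) hsint.le
      linarith
    have h3 : 0 < (Real.sin t) ^ 3 := by positivity
    have h4 : 0 < (s * Ucheb' (N + 1) (Real.cos t)) * (Real.sin t) ^ 3 := by
      rw [mul_assoc]; exact hF
    rcases mul_pos_iff.mp h4 with ⟨h, _⟩ | ⟨_, h⟩
    · exact h
    · linarith
  -- Lemma B: sign at tb
  have lemB : s * Ucheb' (N + 1) (Real.cos tb) < 0 := by
    have hsint : 0 < Real.sin tb := Real.sin_pos_of_pos_of_lt_pi htb_pos (by linarith)
    have hcost : 0 < Real.cos tb := Real.cos_pos_of_mem_Ioo ⟨by linarith, by linarith⟩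
    have hNt : ((N : ℝ) + 2) * tb = tb + m * Real.pi := by
      rw [htb, hmN]
      field_simp
      ring
    have e1 : Real.sin (((N:ℝ) + 2) * tb) = s * Real.sin tb := by
      rw [hNt, Real.sin_add_nat_mul_pi, hs]
    have e2 : Real.cos (((N:ℝ) + 2) * tb) = s * Real.cos tb := by
      rw [hNt, Real.cos_add_nat_mul_pi, hs]
    have key := Ucheb'_key N tb
    rw [e1, e2] at key
    have hF : s * (Ucheb' (N + 1) (Real.cos tb) * (Real.sin tb) ^ 3)
        = -((N:ℝ) + 1) * (Real.sin tb * Real.cos tb) := by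
      rw [key]
      linear_combination (Real.sin tb * Real.cos tb - ((N:ℝ) + 2) * Real.cos tb * Real.sin tb) * hs2
    have hneg : s * (Ucheb' (N + 1) (Real.cos tb) * (Real.sin tb) ^ 3) < 0 := by
      rw [hF]
      have : 0 < Real.sin tb * Real.cos tb := mul_pos hsint hcost
      nlinarith
    have h3 : 0 < (Real.sin tb) ^ 3 := by positivity
    have h4 : (s * Ucheb' (N + 1) (Real.cos tb)) * (Real.sin tb) ^ 3 < 0 := by
      rw [mul_assoc]; exact hneg
    rcases mul_neg_iff.mp h4 with ⟨_, h⟩ | ⟨h, _⟩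
    · linarith
    · exact h
  set a : ℝ := Real.cos ta with ha
  set b : ℝ := Real.cos tb with hb
  have ha_pos : 0 < a := Real.cos_pos_of_mem_Ioo ⟨by linarith, hta_lt⟩
  have hab : a < b := by
    rw [ha, hb]
    apply Real.cos_lt_cos_of_nonneg_of_le_pi htb_pos.le (by linarith) htb_lt_ta
  have hb_le_one : b ≤ 1 := Real.cos_le_one tb
  -- Lemma A': sign of U' on (0, a]
  have lemA' : ∀ x : ℝ, 0 < x → x ≤ a → 0 < s * Ucheb' (N + 1) x := by
    intro x hx1 hx2
    have hx3 : x ≤ 1 := le_trans hx2 (Real.cos_le_one ta)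
    have hcx : Real.cos (Real.arccos x) = x := Real.cos_arccos (by linarith) hx3
    have harccos_a : Real.arccos a = ta := Real.arccos_cos hta_pos.le (by linarith)
    have h1 : ta ≤ Real.arccos x := by
      rw [← harccos_a, Real.arccos_eq_pi_div_two_sub_arcsin, Real.arccos_eq_pi_div_two_sub_arcsin]
      have := Real.monotone_arcsin hx2
      linarith
    have h2 : Real.arccos x < Real.pi / 2 := Real.arccos_lt_pi_div_two.2 hx1
    have := lemA (Real.arccos x) h1 h2
    rwa [hcx] at this
  -- lower bound
  have hlow : a < ν := by
    by_contra h
    push_neg at h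
    have := lemA' ν hν0 h
    rw [hνroot] at this
    simp at this
  -- upper bound via IVT
  have hcont : ContinuousOn (fun x => s * Ucheb' (N + 1) x) (Set.Icc a b) := by
    apply Continuous.continuousOn
    exact continuous_const.mul (Polynomial.continuous _)
  have hIVT : (0 : ℝ) ∈ Set.Icc (s * Ucheb' (N + 1) b) (s * Ucheb' (N + 1) a) := by
    constructor
    · exact lemB.le
    · exact (lemA ta le_rfl hta_lt).le
  obtain ⟨r, hrmem, hr⟩ := intermediate_value_Icc' hab.le hcont hIVT
  replace hr : s * Ucheb' (N + 1) r = 0 := hr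
  have hsne : s ≠ 0 := by
    intro h; rw [h] at hs2; norm_num at hs2
  have hr0 : Ucheb' (N + 1) r = 0 := by
    rcases mul_eq_zero.mp hr with h | h
    · exact absurd h hsne
    · exact h
  have hra : r ≠ a := by
    intro h
    rw [h] at hr
    have h5 := lemA ta le_rfl hta_lt
    rw [← ha] at h5
    linarith
  have hrb : r ≠ b := by
    intro h
    rw [h] at hr
    linarith [lemB]
  have hνr : ν ≤ r := by
    by_contra h
    push_neg at h
    exact hνleast r (lt_of_lt_of_le ha_pos hrmem.1) h hr0
  constructor
  · exact hlow
  · have : r < b := lt_of_le_of_ne hrmem.2 hrb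
    exact lt_of_le_of_lt hνr this
end

section
/- Let N be an odd positive integer and set μ = sin(π/(2(N+2))). Then for every k = 1,…,N, the number α_k = (−1)^{k−1} · U'_{N−k+1}(μ) · U_{k−1}(μ) / U'_N(μ) is strictly positive. -/
open Real Polynomial

lemma neg_one_pow_mul_pos {n : ℕ} {x p : ℝ} (hx : x = (-1) ^ n * p) (hp : 0 < p) :
    0 < (-1) ^ n * x := by
  rwa [hx, ← mul_assoc, ← pow_add, Even.neg_one_pow ⟨n, rfl⟩, one_mul]

lemma div_pos_of_neg_one_pow_mul_pos {a b c d : ℕ} {x y z : ℝ} (hx : 0 < (-1) ^ a * x)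
    (hy : 0 < (-1) ^ b * y) (hz : 0 < (-1) ^ c * z) (h : Even (d + a + b + c)) :
    0 < (-1) ^ d * x * y / z := by
  have hd : (-1 : ℝ) ^ d = (-1) ^ a * (-1) ^ b * (-1) ^ c := by
    rw [← pow_add, ← pow_add, neg_one_pow_eq_pow_mod_two, neg_one_pow_eq_pow_mod_two (a + b + c)]
    rw [Nat.even_iff] at h
    congr 1
    omega
  have key : (-1 : ℝ) ^ d * x * y / z = (-1) ^ a * x * ((-1) ^ b * y) / ((-1) ^ c * z) := by
    rcases neg_one_pow_eq_or ℝ c with hc | hc <;> rw [hd, hc] <;> ring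
  rw [key]
  exact div_pos (mul_pos hx hy) hz

lemma sin_even_mul_pi_div_two_sub (b : ℕ) (x : ℝ) :
    sin (2 * b * (π / 2 - x)) = -((-1) ^ b * sin (2 * b * x)) := by
  rw [← sin_nat_mul_pi_sub]
  ring_nf

lemma cos_even_mul_pi_div_two_sub (b : ℕ) (x : ℝ) :
    cos (2 * b * (π / 2 - x)) = (-1) ^ b * cos (2 * b * x) := by
  rw [← cos_nat_mul_pi_sub]
  ring_nf

lemma sin_odd_mul_pi_div_two_sub (b : ℕ) (x : ℝ) :
    sin ((2 * b + 1) * (π / 2 - x)) = (-1) ^ b * cos ((2 * b + 1) * x) := by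
  rw [← sin_pi_div_two_sub, ← sin_add_nat_mul_pi]
  ring_nf

lemma cos_odd_mul_pi_div_two_sub (b : ℕ) (x : ℝ) :
    cos ((2 * b + 1) * (π / 2 - x)) = (-1) ^ b * sin ((2 * b + 1) * x) := by
  rw [← cos_pi_div_two_sub, ← cos_add_nat_mul_pi]
  ring_nf

lemma Ucheb'_cos_mul_sin_sq (n : ℤ) (θ : ℝ) :
    Ucheb' n (cos θ) * sin θ ^ 2 = cos θ * Ucheb n (cos θ) - (n + 1) * cos ((n + 1) * θ) := by
  have h := congr_arg (eval (cos θ)) (Chebyshev.add_one_mul_T_eq_poly_in_U (R := ℝ) n)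
  simp only [eval_mul, eval_sub, eval_add, eval_X, eval_pow, eval_one, eval_intCast] at h
  rw [Chebyshev.T_real_cos, ← sin_sq] at h
  push_cast at h
  unfold Ucheb Ucheb'
  linarith

lemma Ucheb_sin_mul_cos (n : ℤ) (φ : ℝ) :
    Ucheb n (sin φ) * cos φ = sin ((n + 1) * (π / 2 - φ)) := by
  have h := Chebyshev.U_real_cos (π / 2 - φ) n
  rwa [cos_pi_div_two_sub, sin_pi_div_two_sub] at h

lemma Ucheb'_sin_mul_cos_pow_three (n : ℤ) (φ : ℝ) :
    Ucheb' n (sin φ) * cos φ ^ 3 =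
      sin φ * sin ((n + 1) * (π / 2 - φ)) - (n + 1) * cos φ * cos ((n + 1) * (π / 2 - φ)) := by
  have h := Ucheb'_cos_mul_sin_sq n (π / 2 - φ)
  rw [cos_pi_div_two_sub, sin_pi_div_two_sub] at h
  linear_combination cos φ * h + sin φ * Ucheb_sin_mul_cos n φ

lemma neg_one_pow_mul_Ucheb_sin_pos (n : ℕ) {φ : ℝ} (hφ : 0 < φ) (hnφ : (n + 1) * φ < π / 2) :
    0 < (-1) ^ (n / 2) * Ucheb n (sin φ) := by
  have hπ := pi_pos
  have hcos : 0 < cos φ := cos_pos_of_mem_Ioo ⟨by linarith, by nlinarith⟩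
  refine pos_of_mul_pos_left ?_ hcos.le
  rw [mul_assoc, Ucheb_sin_mul_cos]
  obtain ⟨b, rfl | rfl⟩ := Nat.even_or_odd' n
  · rw [show (((2 * b : ℕ) : ℤ) : ℝ) + 1 = 2 * b + 1 by push_cast; ring,
      sin_odd_mul_pi_div_two_sub, Nat.mul_div_cancel_left b two_pos]
    push_cast at hnφ
    exact neg_one_pow_mul_pos rfl (cos_pos_of_mem_Ioo ⟨by nlinarith, hnφ⟩)
  · rw [show (((2 * b + 1 : ℕ) : ℤ) : ℝ) + 1 = 2 * ((b + 1 : ℕ) : ℝ) by push_cast; ring,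
      sin_even_mul_pi_div_two_sub, show (2 * b + 1) / 2 = b by omega]
    push_cast at hnφ ⊢
    exact neg_one_pow_mul_pos (by ring) (sin_pos_of_pos_of_lt_pi (by positivity) (by linarith))

lemma neg_one_pow_mul_Ucheb'_sin_pos (n : ℕ) (hn : 1 ≤ n) {φ : ℝ} (hφ : 0 < φ)
    (hnφ : (n + 1) * φ < π / 2) :
    0 < (-1) ^ ((n - 1) / 2) * Ucheb' n (sin φ) := by
  have hπ := pi_pos
  have hsin : 0 < sin φ := sin_pos_of_pos_of_lt_pi hφ (by nlinarith)
  have hcos : 0 < cos φ := cos_pos_of_mem_Ioo ⟨by linarith, by nlinarith⟩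
  refine pos_of_mul_pos_left ?_ (pow_pos hcos 3).le
  rw [mul_assoc, Ucheb'_sin_mul_cos_pow_three]
  obtain ⟨b, rfl | rfl⟩ := Nat.even_or_odd' n
  · obtain ⟨c, rfl⟩ : ∃ c, b = c + 1 := ⟨b - 1, by omega⟩
    rw [show (((2 * (c + 1) : ℕ) : ℤ) : ℝ) + 1 = 2 * ((c + 1 : ℕ) : ℝ) + 1 by push_cast; ring,
      sin_odd_mul_pi_div_two_sub, cos_odd_mul_pi_div_two_sub,
      show (2 * (c + 1) - 1) / 2 = c by omega]
    set m : ℝ := 2 * ((c + 1 : ℕ) : ℝ) + 1 with hm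
    have hm1 : 0 < m - 1 := by rw [hm]; push_cast; linarith [(c.cast_nonneg : (0 : ℝ) ≤ c)]
    have hmφ : m * φ < π / 2 := by push_cast [hm] at hnφ ⊢; linarith
    have hsin_m : 0 < sin (m * φ) :=
      sin_pos_of_pos_of_lt_pi (mul_pos (by linarith) hφ) (by linarith)
    have hsin_sub : sin (m * φ) * cos φ - cos (m * φ) * sin φ = sin ((m - 1) * φ) := by
      rw [← sin_sub]; ring_nf
    have hsin_m1 : 0 < sin ((m - 1) * φ) := sin_pos_of_pos_of_lt_pi (by positivity) (by nlinarith)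
    refine neg_one_pow_mul_pos (p := m * cos φ * sin (m * φ) - sin φ * cos (m * φ)) (by ring) ?_
    linarith [mul_pos (mul_pos hm1 hcos) hsin_m]
  · rw [show (((2 * b + 1 : ℕ) : ℤ) : ℝ) + 1 = 2 * ((b + 1 : ℕ) : ℝ) by push_cast; ring,
      sin_even_mul_pi_div_two_sub, cos_even_mul_pi_div_two_sub,
      show (2 * b + 1 - 1) / 2 = b by omega]
    set m : ℝ := ((b + 1 : ℕ) : ℝ) with hm
    have hmφ : 2 * m * φ < π / 2 := by push_cast [hm] at hnφ ⊢; linarith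
    have hm0 : 0 < m := by positivity
    have hsin_m : 0 < sin (2 * m * φ) := sin_pos_of_pos_of_lt_pi (by positivity) (by linarith)
    have hcos_m : 0 < cos (2 * m * φ) := cos_pos_of_mem_Ioo ⟨by nlinarith, hmφ⟩
    refine neg_one_pow_mul_pos
      (p := sin φ * sin (2 * m * φ) + 2 * m * cos φ * cos (2 * m * φ)) (by ring) ?_
    positivity

theorem stmt18_general (N : ℕ) (hNodd : Odd N)
    (μ : ℝ) (hμ : μ = Real.sin (Real.pi / (2 * (N + 2)))) :
    ∀ k : ℕ, 1 ≤ k → k ≤ N →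
      0 < (-1 : ℝ) ^ (k - 1) * Ucheb' ((N : ℤ) - k + 1) μ * Ucheb ((k : ℤ) - 1) μ
            / Ucheb' (N : ℤ) μ := by
  intro k hk1 hkN
  have hN_mod := Nat.odd_iff.mp hNodd
  set φ := π / (2 * (N + 2)) with hφ_def
  have hφ : 0 < φ := by positivity
  have hNφ : ((N : ℝ) + 1) * φ < π / 2 := by
    rw [hφ_def, mul_div_assoc', div_lt_div_iff₀ (by positivity) two_pos]
    nlinarith [pi_pos]
  have hbound (n : ℕ) (hn : n ≤ N) : ((n : ℝ) + 1) * φ < π / 2 :=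
    lt_of_le_of_lt (by gcongr) hNφ
  rw [hμ, show (N : ℤ) - k + 1 = ((N - k + 1 : ℕ) : ℤ) by omega,
    show (k : ℤ) - 1 = ((k - 1 : ℕ) : ℤ) by omega]
  refine div_pos_of_neg_one_pow_mul_pos
    (neg_one_pow_mul_Ucheb'_sin_pos _ (by omega) hφ (hbound _ (by omega)))
    (neg_one_pow_mul_Ucheb_sin_pos _ hφ (hbound _ (by omega)))
    (neg_one_pow_mul_Ucheb'_sin_pos _ (by omega) hφ hNφ) ?_
  rw [Nat.even_iff]
  omega

theorem stmt18 (N : ℕ) (hN : 0 < N) (hNodd : Odd N)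
    (μ : ℝ) (hμ : μ = Real.sin (Real.pi / (2 * (N + 2)))) :
    ∀ k : ℕ, 1 ≤ k → k ≤ N →
      0 < (-1 : ℝ) ^ (k - 1) * Ucheb' ((N : ℤ) - k + 1) μ * Ucheb ((k : ℤ) - 1) μ
            / Ucheb' (N : ℤ) μ :=
  stmt18_general N hNodd μ hμ
end
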